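/- arXiv:1402.0333 — 2 statements merged into one kernel-verified Lean document; each statement's English description precedes it below -/
import Mathlib

section
/- Let n be a positive integer and define 𝒦_n := {k ∈ ℕ : G_k(n) ≡ 0 (mod n)}. If 3 ∣ n and 9 ∤ n, then every positive multiple of 8 lies in ℕ ∖ 𝒦_n. If in addition n ≢ 2 (mod 4), then ℕ ∖ 𝒦_n is exactly the set of positive multiples of 8. -/
/-!
Reducing modulo `q ∣ n` and using periodicity, `G_k(n) ≡ (n/q)² S_k(q) (mod q)`, where `S_k(q)` is
the sum of `z^k` over `ℤ[i]/q`. If `3 ∥ n`, then `ℤ[i]/3 = 𝔽₉` gives `S_{8m}(3) = -1`, while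
`(n/3)²` is a unit mod 3; so `3 ∤ G_{8m}(n)`.

Conversely it suffices that `p^e ∣ G_k(p^e)` for each `p^e ∥ n`. For `e ≥ 2` this holds for all
`k`, since `G_k(rp) ≡ p² G_k(r) (mod rp)` when `p ∣ r`. For `e = 1` the prime `p` is odd, as
`n ≢ 2 (mod 4)`, and `S_k(p) = 0`: for `p ≡ 1 (mod 4)` via the two homomorphisms `ℤ[i]/p → 𝔽_p`,
for `p ≡ 3 (mod 4)` because `ℤ[i]/p = 𝔽_{p²}` and `8 ∣ p² - 1`.
-/

/-- The Gaussian power sum `G_k(n) = ∑_{1 ≤ a, b ≤ n} (a + b·i)^k` in `ℤ[i]`. -/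
def Gsum (k n : ℕ) : GaussianInt :=
  ∑ a ∈ Finset.Icc 1 n, ∑ b ∈ Finset.Icc 1 n, (⟨(a : ℤ), (b : ℤ)⟩ : GaussianInt) ^ k

/-- `𝒦_n`: the set of `k` with `G_k(n) ≡ 0 (mod n)` in `ℤ[i]`. -/
def Kset (n : ℕ) : Set ℕ := {k | (n : GaussianInt) ∣ Gsum k n}

open Finset

theorem Finset.sum_Icc_one_mul {M : Type*} [AddCommMonoid M] (f : ℕ → M) (r t : ℕ) :
    ∑ a ∈ Icc 1 (r * t), f a = ∑ a ∈ Icc 1 r, ∑ s ∈ range t, f (r * s + a) := by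
  change ∑ a ∈ Ioc 0 (r * t), f a = ∑ a ∈ Ioc 0 r, ∑ s ∈ range t, f (r * s + a)
  induction t with
  | zero => simp
  | succ t ih =>
    rw [mul_add_one, ← sum_Ioc_consecutive _ (Nat.zero_le _) (Nat.le_add_right _ r), ih]
    have hshift := map_add_left_Ioc 0 r (r * t)
    rw [add_zero] at hshift
    rw [← hshift, sum_map, ← sum_add_distrib]
    simp [sum_range_succ]

namespace ZMod

variable {M : Type*} [AddCommMonoid M] {q : ℕ} [NeZero q]

theorem sum_range_natCast (F : ZMod q → M) : ∑ a ∈ range q, F a = ∑ x, F x :=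
  sum_nbij' (↑) val (fun _ _ => mem_univ _) (fun x _ => mem_range.2 (val_lt x))
    (fun _ ha => val_cast_of_lt (mem_range.1 ha)) (fun x _ => natCast_zmod_val x) fun _ _ => rfl

theorem sum_Icc_one_natCast (F : ZMod q → M) : ∑ a ∈ Icc 1 q, F a = ∑ x, F x := by
  rw [← Ico_add_one_right_eq_Icc, sum_Ico_eq_sum_range, Nat.add_sub_cancel]
  simpa [add_comm] using (sum_range_natCast fun x => F (x + 1)).trans
    (Fintype.sum_equiv (Equiv.addRight 1) _ _ fun _ => rfl)

theorem sum_Icc_one_natCast_of_dvd {n : ℕ} (h : q ∣ n) (F : ZMod q → M) :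
    ∑ a ∈ Icc 1 n, F a = (n / q) • ∑ x, F x := by
  obtain ⟨t, rfl⟩ := h
  simp [sum_Icc_one_mul, ← smul_sum, sum_Icc_one_natCast, Nat.mul_div_cancel_left t (NeZero.pos q)]

end ZMod

/-- Since `(r y)² = 0`, each term is `x^k + k x^(k-1) r y`, and the linear parts add up to
a multiple of `r p`. -/
theorem sum_range_sum_range_add_mul_pow {R : Type*} [CommRing R] {r p : ℕ} (hr : (r : R) ^ 2 = 0)
    (hrp : (r * p : R) = 0) (x w₁ w₂ : R) (k : ℕ) :
    ∑ s ∈ range p, ∑ t ∈ range p, (x + r * (s * w₁ + t * w₂)) ^ k = p ^ 2 * x ^ k := by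
  have hlin : ∀ y : R, (x + r * y) ^ k = x ^ k + k * x ^ (k - 1) * r * y := by
    intro y
    have := sq_dvd_add_pow_sub_sub (r * y) x k
    rw [mul_pow, hr, zero_mul, zero_dvd_iff, sub_sub, sub_eq_zero] at this
    rw [this]
    ring
  simp only [hlin, sum_add_distrib, sum_const, card_range, nsmul_eq_mul, ← mul_sum]
  linear_combination (k * x ^ (k - 1) * (∑ i ∈ range p, i * w₁ + ∑ i ∈ range p, i * w₂)) * hrp

theorem FiniteField.sum_pow_eq_ite (K : Type*) [Field K] [Fintype K] (k : ℕ) :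
    ∑ x : K, x ^ k = if k ≠ 0 ∧ Fintype.card K - 1 ∣ k then -1 else 0 := by
  classical
  rcases eq_or_ne k 0 with rfl | hk
  · simp
  calc ∑ x : K, x ^ k = ∑ x ∈ univ.filter (· ≠ 0), x ^ k :=
        (sum_filter_of_ne fun x _ hx => by rintro rfl; exact hx (zero_pow hk)).symm
    _ = ∑ x : {x : K // x ≠ 0}, (x : K) ^ k := sum_subtype _ (by simp) _
    _ = ∑ x : Kˣ, (x : K) ^ k := Fintype.sum_equiv unitsEquivNeZero.symm _ _ fun _ => rfl
    _ = _ := by rw [sum_pow_units]; simp [hk]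

namespace QuadraticAlgebra

variable {R : Type*} {a b : R}

instance [Fintype R] : Fintype (QuadraticAlgebra R a b) :=
  Fintype.ofEquiv _ (equivProd a b).symm

theorem card [Fintype R] : Fintype.card (QuadraticAlgebra R a b) = Fintype.card R ^ 2 := by
  rw [Fintype.card_congr (equivProd a b), Fintype.card_prod, sq]

theorem sum_eq_sum_sum {M : Type*} [AddCommMonoid M] [Fintype R]
    (f : QuadraticAlgebra R a b → M) : ∑ z, f z = ∑ x, ∑ y, f ⟨x, y⟩ := by
  rw [← Fintype.sum_prod_type']
  exact Fintype.sum_equiv (equivProd a b) _ _ fun _ => rfl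

instance [CommRing R] (p : ℕ) [CharP R p] : CharP (QuadraticAlgebra R a b) p :=
  charP_of_injective_algebraMap algebraMap_injective p

end QuadraticAlgebra

/-- `ℤ[i] / n ℤ[i]`, realised as `(ZMod n)[ω]` with `ω² = -1`. -/
abbrev GaussianIntMod (n : ℕ) := QuadraticAlgebra (ZMod n) (-1) 0

namespace GaussianIntMod

open QuadraticAlgebra

def ofGaussianInt (n : ℕ) : GaussianInt →+* GaussianIntMod n :=
  Zsqrtd.lift ⟨ω, by ext <;> simp⟩

@[simp] theorem ofGaussianInt_apply (n : ℕ) (z : GaussianInt) :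
    ofGaussianInt n z = ⟨z.re, z.im⟩ := by
  ext <;> simp [ofGaussianInt]

theorem ofGaussianInt_eq_zero_iff {n : ℕ} {z : GaussianInt} :
    ofGaussianInt n z = 0 ↔ (n : GaussianInt) ∣ z := by
  rw [← Int.cast_natCast, Zsqrtd.intCast_dvd, ← ZMod.intCast_zmod_eq_zero_iff_dvd,
    ← ZMod.intCast_zmod_eq_zero_iff_dvd, ofGaussianInt_apply, QuadraticAlgebra.ext_iff]
  rfl

def powSum (k n : ℕ) [NeZero n] : GaussianIntMod n := ∑ z, z ^ k

/-- A square root `v` of `-1` gives a ring hom `z ↦ z.re + z.im * v` to `ZMod n`, which sends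
`powSum k n` to `n` times a sum over `ZMod n`; the roots `u` and `-u` together recover both
coordinates. -/
theorem powSum_eq_zero_of_mul_self_eq_neg_one {n : ℕ} [NeZero n] (h2 : IsUnit (2 : ZMod n))
    {u : ZMod n} (hu : u * u = -1) (k : ℕ) : powSum k n = 0 := by
  have key : ∀ v : ZMod n, v * v = -1 → (powSum k n).re + (powSum k n).im * v = 0 := by
    intro v hv
    have hψ : ∀ z : GaussianIntMod n, lift ⟨v, by simp [hv]⟩ z = z.re + z.im * v :=
      fun z => by simp
    have hshift : ∀ y : ZMod n, ∑ x, (x + y * v) ^ k = ∑ x : ZMod n, x ^ k := fun y =>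
      Fintype.sum_equiv (Equiv.addRight (y * v)) _ _ fun _ => rfl
    rw [← hψ, powSum, map_sum, sum_eq_sum_sum]
    simp only [map_pow]
    simp only [hψ]
    rw [sum_comm]
    simp [hshift]
  have hpos := key u hu
  have hneg := key (-u) (by rw [neg_mul_neg, hu])
  have hu' : IsUnit u := IsUnit.of_mul_eq_one (-u) (by linear_combination -hu)
  ext
  · exact h2.mul_right_eq_zero.1 (by linear_combination hpos + hneg)
  · exact (h2.mul hu').mul_right_eq_zero.1 (by linear_combination hpos - hneg)

/-- Here `-1` is not a square mod `p`, so `GaussianIntMod p` is the field with `p²` elements. -/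
theorem powSum_of_mod_four_eq_three {p : ℕ} [Fact p.Prime] (hp : p % 4 = 3) (k : ℕ) :
    powSum k p = if k ≠ 0 ∧ p ^ 2 - 1 ∣ k then -1 else 0 := by
  have : Fact (∀ r : ZMod p, r ^ 2 ≠ -1 + 0 * r) :=
    ⟨fun r hr => ZMod.exists_sq_eq_neg_one_iff.1 ⟨r, by linear_combination -hr⟩ hp⟩
  rw [powSum, FiniteField.sum_pow_eq_ite, QuadraticAlgebra.card, ZMod.card]

theorem ofGaussianInt_Gsum {q n : ℕ} [NeZero q] (h : q ∣ n) (k : ℕ) :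
    ofGaussianInt q (Gsum k n) = (n / q) ^ 2 • powSum k q := by
  simp only [Gsum, map_sum, map_pow, ofGaussianInt_apply, Int.cast_natCast]
  rw [sum_congr rfl fun (a : ℕ) _ => ZMod.sum_Icc_one_natCast_of_dvd h
      fun y : ZMod q => (⟨(a : ZMod q), y⟩ : GaussianIntMod q) ^ k, ← smul_sum,
    ZMod.sum_Icc_one_natCast_of_dvd h fun x : ZMod q => ∑ y, (⟨x, y⟩ : GaussianIntMod q) ^ k,
    smul_smul, ← sq, powSum, sum_eq_sum_sum]

end GaussianIntMod

section Gsum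

open GaussianIntMod QuadraticAlgebra

theorem natCast_dvd_Gsum_self_iff {q : ℕ} [NeZero q] (k : ℕ) :
    (q : GaussianInt) ∣ Gsum k q ↔ powSum k q = 0 := by
  rw [← ofGaussianInt_eq_zero_iff, ofGaussianInt_Gsum dvd_rfl, Nat.div_self (NeZero.pos q),
    one_pow, one_smul]

theorem natCast_dvd_Gsum_of_dvd {q n k : ℕ} (hqn : q ∣ n) (h : (q : GaussianInt) ∣ Gsum k q) :
    (q : GaussianInt) ∣ Gsum k n := by
  rcases eq_or_ne q 0 with rfl | hq
  · simp [zero_dvd_iff.1 hqn, Gsum]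
  have : NeZero q := ⟨hq⟩
  rw [natCast_dvd_Gsum_self_iff] at h
  rw [← ofGaussianInt_eq_zero_iff, ofGaussianInt_Gsum hqn, h, smul_zero]

theorem natCast_dvd_Gsum_of_forall_primeFactors {n k : ℕ}
    (h : ∀ p ∈ n.primeFactors,
      ((p ^ n.factorization p : ℕ) : GaussianInt) ∣ Gsum k (p ^ n.factorization p)) :
    (n : GaussianInt) ∣ Gsum k n := by
  rcases eq_or_ne n 0 with rfl | hn
  · simp [Gsum]
  have hprod : ((∏ p ∈ n.primeFactors, p ^ n.factorization p : ℕ) : GaussianInt) ∣ Gsum k n := by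
    rw [Nat.cast_prod]
    refine prod_dvd_of_coprime (fun p hp p' hp' hne => ?_)
      fun p hp => natCast_dvd_Gsum_of_dvd (Nat.ordProj_dvd n p) (h p hp)
    exact (Nat.coprime_pow_primes _ _ (Nat.prime_of_mem_primeFactors hp)
      (Nat.prime_of_mem_primeFactors hp') hne).cast
  rwa [← Nat.prod_primeFactors_pow_factorization hn] at hprod

/-- Write `a = r s + a₀` and `b = r t + b₀` with `1 ≤ a₀, b₀ ≤ r` and `s, t < p`; modulo `r p`
the sum over `s` and `t` collapses to `p² (a₀ + b₀ i)^k`. -/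
theorem natCast_mul_dvd_Gsum_mul_sub {p r : ℕ} (hpr : p ∣ r) (k : ℕ) :
    ((r * p : ℕ) : GaussianInt) ∣ Gsum k (r * p) - p ^ 2 * Gsum k r := by
  rw [← ofGaussianInt_eq_zero_iff, map_sub, sub_eq_zero, map_mul, map_pow, map_natCast]
  have hr : (r : GaussianIntMod (r * p)) ^ 2 = 0 := by
    rw [← Nat.cast_pow, CharP.cast_eq_zero_iff (GaussianIntMod (r * p)) (r * p), sq]
    exact mul_dvd_mul_left r hpr
  have hrp : (r * p : GaussianIntMod (r * p)) = 0 := by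
    rw [← Nat.cast_mul, CharP.cast_eq_zero]
  have hterm : ∀ a b s t : ℕ,
      (⟨((r * s + a : ℕ) : ZMod (r * p)), ((r * t + b : ℕ) : ZMod (r * p))⟩
        : GaussianIntMod (r * p)) = ⟨(a : ZMod (r * p)), (b : ZMod (r * p))⟩
          + (r : GaussianIntMod (r * p)) * (s * 1 + t * (ω : GaussianIntMod (r * p))) := by
    intro a b s t
    ext <;> simp [add_comm]
  simp only [Gsum, map_sum, map_pow, ofGaussianInt_apply, Int.cast_natCast,
    sum_Icc_one_mul, hterm]
  rw [mul_sum]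
  refine sum_congr rfl fun a _ => ?_
  rw [sum_comm, mul_sum]
  exact sum_congr rfl fun b _ => sum_range_sum_range_add_mul_pow hr hrp _ _ _ k

theorem natCast_pow_dvd_Gsum {p e : ℕ} (he : 2 ≤ e) (k : ℕ) :
    ((p ^ e : ℕ) : GaussianInt) ∣ Gsum k (p ^ e) := by
  induction e, he using Nat.le_induction with
  | base =>
    have h := natCast_mul_dvd_Gsum_mul_sub (dvd_refl p) k
    rw [← sq] at h
    exact (dvd_sub_left (by push_cast; exact dvd_mul_right _ _)).1 h
  | succ e he ih =>
    have h := natCast_mul_dvd_Gsum_mul_sub (dvd_pow_self p (by omega : e ≠ 0)) k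
    rw [← pow_succ] at h
    obtain ⟨c, hc⟩ := ih
    exact (dvd_sub_left ⟨p * c, by rw [hc]; push_cast; ring⟩).1 h

theorem natCast_dvd_Gsum_prime {p k : ℕ} (hp : p.Prime) (hp2 : p ≠ 2) (hk : k = 0 ∨ ¬ 8 ∣ k) :
    (p : GaussianInt) ∣ Gsum k p := by
  have : Fact p.Prime := ⟨hp⟩
  rw [natCast_dvd_Gsum_self_iff]
  by_cases hp4 : p % 4 = 3
  · rw [powSum_of_mod_four_eq_three hp4, if_neg]
    rintro ⟨hk0, hdvd⟩
    have h8 := (Nat.eight_dvd_sq_sub_one_of_odd (hp.odd_of_ne_two hp2)).trans hdvd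
    omega
  · obtain ⟨u, hu⟩ := ZMod.exists_sq_eq_neg_one_iff.2 hp4
    have h2 : IsUnit (2 : ZMod p) := by
      simpa using (ZMod.prime_ne_zero p 2 hp2).isUnit
    exact powSum_eq_zero_of_mul_self_eq_neg_one h2 hu.symm k

theorem natCast_dvd_Gsum {n k : ℕ} (h4 : n % 4 ≠ 2) (hk : k = 0 ∨ ¬ 8 ∣ k) :
    (n : GaussianInt) ∣ Gsum k n := by
  refine natCast_dvd_Gsum_of_forall_primeFactors fun p hp => ?_
  have hn : n ≠ 0 := (Nat.mem_primeFactors.1 hp).2.2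
  have he : n.factorization p ≠ 0 := by rwa [← Finsupp.mem_support_iff, Nat.support_factorization]
  rcases (by omega : n.factorization p = 1 ∨ 2 ≤ n.factorization p) with he1 | he2
  · rw [he1, pow_one]
    refine natCast_dvd_Gsum_prime (Nat.prime_of_mem_primeFactors hp) ?_ hk
    rintro rfl
    have hsplit := Nat.ordProj_mul_ordCompl_eq_self n 2
    have hodd := Nat.not_dvd_ordCompl Nat.prime_two hn
    rw [he1, pow_one] at hsplit hodd
    omega
  · exact natCast_pow_dvd_Gsum he2 k

theorem three_not_dvd_Gsum_eight_mul {t m : ℕ} (ht : ¬ 3 ∣ t) (hm : m ≠ 0) :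
    ¬ (3 : GaussianInt) ∣ Gsum (8 * m) (3 * t) := by
  have : Fact (Nat.Prime 3) := ⟨Nat.prime_three⟩
  rw [← Nat.cast_ofNat (R := GaussianInt) (n := 3), ← ofGaussianInt_eq_zero_iff,
    ofGaussianInt_Gsum (dvd_mul_right 3 t), Nat.mul_div_cancel_left t three_pos,
    powSum_of_mod_four_eq_three (by norm_num), if_pos ⟨by omega, by norm_num⟩, smul_neg,
    nsmul_one, neg_eq_zero, CharP.cast_eq_zero_iff (GaussianIntMod 3) 3]
  exact fun h => ht (Nat.prime_three.dvd_of_dvd_pow h)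

end Gsum

theorem multiples_of_eight_not_in_Kset_general (n : ℕ) (h3 : 3 ∣ n) (h9 : ¬ 9 ∣ n) :
    ({k : ℕ | 0 < k ∧ 8 ∣ k} ⊆ (Kset n)ᶜ) ∧
    (n % 4 ≠ 2 → (Kset n)ᶜ = {k : ℕ | 0 < k ∧ 8 ∣ k}) := by
  obtain ⟨t, rfl⟩ := h3
  have ht : ¬ 3 ∣ t := fun ⟨u, hu⟩ => h9 ⟨u, by omega⟩
  have hsub : {k : ℕ | 0 < k ∧ 8 ∣ k} ⊆ (Kset (3 * t))ᶜ := by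
    rintro _ ⟨hk, m, rfl⟩ hdvd
    have hm : m ≠ 0 := by omega
    have h3 : (3 : GaussianInt) ∣ ((3 * t : ℕ) : GaussianInt) := ⟨t, by push_cast; rfl⟩
    exact three_not_dvd_Gsum_eight_mul ht hm (h3.trans hdvd)
  refine ⟨hsub, fun h4 => Set.Subset.antisymm (fun k hk => ?_) hsub⟩
  by_contra hk'
  exact hk (natCast_dvd_Gsum h4 (by simp only [Set.mem_ofPred_eq] at hk'; omega))

theorem multiples_of_eight_not_in_Kset (n : ℕ) (hn : 0 < n) (h3 : 3 ∣ n) (h9 : ¬ 9 ∣ n) :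
    ({k : ℕ | 0 < k ∧ 8 ∣ k} ⊆ (Kset n)ᶜ) ∧
    (n % 4 ≠ 2 → (Kset n)ᶜ = {k : ℕ | 0 < k ∧ 8 ∣ k}) :=
  multiples_of_eight_not_in_Kset_general n h3 h9
end

section
/- Let n > 1 be an integer. Then G_n(n) ≢ 0 (mod n) in ℤ[i] if and only if there exists a prime p such that: (i) p ≡ 3 (mod 4), (ii) p³ − p ∣ n, and (iii) p² ∤ n. -/
open Finset

section Sums

variable {M : Type*} [AddCommMonoid M]

theorem sum_Icc_one_eq_sum_range {f : ℕ → M} {n : ℕ} (h : f n = f 0) :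
    ∑ a ∈ Icc 1 n, f a = ∑ a ∈ range n, f a := by
  rcases n with _ | n
  · rfl
  rw [sum_Icc_succ_top (by omega), h, sum_range_succ', ← Ico_add_one_right_eq_Icc,
    sum_Ico_eq_sum_range]
  simp only [add_comm 1, Nat.add_sub_cancel]

theorem sum_range_mul (f : ℕ → M) (c m : ℕ) :
    ∑ a ∈ range (c * m), f a = ∑ s ∈ range c, ∑ r ∈ range m, f (r + m * s) := by
  simp only [Finset.sum_range, ← Fintype.sum_prod_type']
  exact (Fintype.sum_equiv finProdFinEquiv _ _ fun _ => rfl).symm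

theorem sum_range_natCast_zmod {p : ℕ} [NeZero p] (f : ZMod p → M) :
    ∑ a ∈ range p, f a = ∑ x, f x :=
  sum_nbij' (↑) ZMod.val (fun _ _ => mem_univ _) (fun x _ => mem_range.2 x.val_lt)
    (fun _ ha => ZMod.val_cast_of_lt (mem_range.1 ha)) (fun x _ => ZMod.natCast_zmod_val x)
    (fun _ _ => rfl)

end Sums

theorem natCast_dvd_iff_forall_ordProj_dvd {R : Type*} [CommRing R] {n : ℕ} (hn : n ≠ 0)
    {x : R} : (n : R) ∣ x ↔ ∀ p ∈ n.primeFactors, ((p ^ n.factorization p : ℕ) : R) ∣ x := by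
  refine ⟨fun h p _ => (Nat.cast_dvd_cast (Nat.ordProj_dvd n p)).trans h, fun h => ?_⟩
  rw [Nat.prod_primeFactors_pow_factorization hn, Nat.cast_prod]
  refine prod_dvd_of_coprime (fun p hp q hq hpq => ?_) h
  exact (Nat.coprime_pow_primes _ _ (Nat.prime_of_mem_primeFactors hp)
    (Nat.prime_of_mem_primeFactors hq) hpq).cast

theorem FiniteField.sum_pow_eq_zero_iff {K : Type*} [Field K] [Fintype K] {k : ℕ}
    (hk : k ≠ 0) : ∑ x : K, x ^ k = 0 ↔ ¬ Fintype.card K - 1 ∣ k := by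
  classical
  have hunits : ∑ x : K, x ^ k = ∑ x : Kˣ, (x : K) ^ k := by
    rw [Fintype.sum_eq_add_sum_subtype_ne _ 0, zero_pow hk, zero_add]
    exact (Fintype.sum_equiv unitsEquivNeZero _ _ fun _ => rfl).symm
  rw [hunits, FiniteField.sum_pow_units]
  split_ifs with h <;> simp [h]

theorem Nat.Prime.pow_three_sub_dvd_iff {p n : ℕ} (hp : p.Prime) (hpn : p ∣ n) :
    p ^ 3 - p ∣ n ↔ p ^ 2 - 1 ∣ n := by
  have hcop : Nat.Coprime p (p ^ 2 - 1) := by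
    refine (Nat.Prime.coprime_iff_not_dvd hp).2 fun h => hp.one_lt.ne' (Nat.dvd_one.1 ?_)
    have := Nat.dvd_sub (dvd_pow_self p two_ne_zero) h
    rwa [Nat.sub_sub_self (Nat.one_le_pow _ _ hp.pos)] at this
  rw [show p ^ 3 - p = p * (p ^ 2 - 1) by rw [Nat.mul_sub_one, ← pow_succ']]
  exact ⟨(dvd_mul_left _ _).trans, hcop.mul_dvd_of_dvd_of_dvd hpn⟩

section SqrtNegOne

variable {K L : Type*} [Field K] [Field L] [Algebra K L] {c : L}

theorem eq_zero_of_algebraMap_add_algebraMap_mul_eq_zero (hK : ¬ IsSquare (-1 : K))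
    (hc : c * c = -1) {x y : K} (h : algebraMap K L x + algebraMap K L y * c = 0) :
    x = 0 ∧ y = 0 := by
  have hy : y = 0 := by
    by_contra hy
    have hc' : c = algebraMap K L (-x / y) := by
      rw [map_div₀, map_neg, eq_div_iff ((map_ne_zero _).2 hy)]
      linear_combination h
    refine hK ⟨-x / y, (algebraMap K L).injective ?_⟩
    rw [map_mul, ← hc', hc, map_neg, map_one]
  subst hy
  simpa using h

theorem bijective_algebraMap_add_algebraMap_mul [Fintype K] [Fintype L]
    (hK : ¬ IsSquare (-1 : K)) (hc : c * c = -1) (hcard : Fintype.card L = Fintype.card K ^ 2) :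
    Function.Bijective fun xy : K × K => algebraMap K L xy.1 + algebraMap K L xy.2 * c := by
  rw [Fintype.bijective_iff_injective_and_card]
  refine ⟨fun a b hab => ?_, by simp [hcard, sq]⟩
  obtain ⟨h₁, h₂⟩ := eq_zero_of_algebraMap_add_algebraMap_mul_eq_zero hK hc
    (x := a.1 - b.1) (y := a.2 - b.2) (by simp only [map_sub]; linear_combination hab)
  exact Prod.ext (sub_eq_zero.1 h₁) (sub_eq_zero.1 h₂)

end SqrtNegOne

section BoxSum

variable {R : Type*} [CommRing R]

def boxSum (ι : R) (m k : ℕ) : R :=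
  ∑ a ∈ range m, ∑ b ∈ range m, ((a : R) + b * ι) ^ k

variable (ι : R)

theorem map_boxSum {S : Type*} [CommRing S] (φ : R →+* S) (m k : ℕ) :
    φ (boxSum ι m k) = boxSum (φ ι) m k := by
  simp [boxSum]

theorem sum_Icc_Icc_eq_boxSum {n : ℕ} (hn : (n : R) = 0) (k : ℕ) :
    ∑ a ∈ Icc 1 n, ∑ b ∈ Icc 1 n, ((a : R) + b * ι) ^ k = boxSum ι n k := by
  rw [boxSum, sum_Icc_one_eq_sum_range (by simp [hn])]
  exact sum_congr rfl fun a _ => sum_Icc_one_eq_sum_range (by simp [hn])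

theorem boxSum_mul (c m k : ℕ) :
    boxSum ι (c * m) k = ∑ s ∈ range c, ∑ t ∈ range c, ∑ r ∈ range m, ∑ u ∈ range m,
      ((r + u * ι) + m * (s + t * ι)) ^ k := by
  rw [boxSum, sum_range_mul]
  refine sum_congr rfl fun s _ => ?_
  simp_rw [sum_range_mul _ c m]
  rw [sum_comm]
  refine sum_congr rfl fun t _ => sum_congr rfl fun r _ => sum_congr rfl fun u _ => ?_
  push_cast
  ring

theorem natCast_dvd_boxSum_one (c : ℕ) : (c : R) ∣ boxSum ι c 1 := by
  simp only [boxSum, pow_one, sum_add_distrib, sum_const, card_range, nsmul_eq_mul, ← sum_mul,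
    ← mul_sum, ← mul_add]
  exact dvd_mul_right _ _

theorem sq_dvd_boxSum_mul_sub (c m k : ℕ) :
    (m : R) ^ 2 ∣ boxSum ι (c * m) k - c ^ 2 * boxSum ι m k
      - boxSum ι m (k - 1) * m * k * boxSum ι c 1 := by
  have expand : boxSum ι (c * m) k - c ^ 2 * boxSum ι m k
      - boxSum ι m (k - 1) * m * k * boxSum ι c 1
      = ∑ s ∈ range c, ∑ t ∈ range c, ∑ r ∈ range m, ∑ u ∈ range m,
        (((r + u * ι) + m * (s + t * ι)) ^ k - (r + u * ι) ^ (k - 1) * (m * (s + t * ι)) * k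
          - (r + u * ι) ^ k) := by
    rw [boxSum_mul]
    simp only [sum_sub_distrib, boxSum, sum_mul, mul_sum, pow_one, sum_const,
      card_range, nsmul_eq_mul]
    rw [sub_right_comm]
    refine congrArg₂ (· - ·) (congrArg₂ (· - ·) rfl ?_) ?_
    · exact sum_congr rfl fun _ _ => sum_congr rfl fun _ _ =>
        sum_congr rfl fun _ _ => sum_congr rfl fun _ _ => by ring
    · exact sum_congr rfl fun _ _ => sum_congr rfl fun _ _ => by ring
  rw [expand]
  refine dvd_sum fun s _ => dvd_sum fun t _ => dvd_sum fun r _ => dvd_sum fun u _ => ?_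
  exact (pow_dvd_pow_of_dvd (dvd_mul_right _ _) 2).trans (sq_dvd_add_pow_sub_sub _ _ k)

theorem dvd_boxSum_mul_sub (c m k : ℕ) :
    (m : R) ∣ boxSum ι (c * m) k - c ^ 2 * boxSum ι m k := by
  have h₁ := (dvd_pow_self (m : R) two_ne_zero).trans (sq_dvd_boxSum_mul_sub ι c m k)
  have h₂ : (m : R) ∣ boxSum ι m (k - 1) * m * k * boxSum ι c 1 :=
    ((dvd_mul_left _ _).mul_right _).mul_right _
  simpa using h₁.add h₂

theorem dvd_boxSum_mul_iff {c m : ℕ} (h : Nat.Coprime m c) (k : ℕ) :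
    (m : R) ∣ boxSum ι (c * m) k ↔ (m : R) ∣ boxSum ι m k := by
  rw [dvd_iff_dvd_of_dvd_sub (dvd_boxSum_mul_sub ι c m k)]
  have hc : IsCoprime (m : R) ((c : R) ^ 2) := by simpa using (h.pow_right 2).cast (R := R)
  exact ⟨hc.dvd_of_dvd_mul_left, fun h => h.mul_left _⟩

theorem pow_succ_dvd_boxSum_pow_succ_sub (p : ℕ) {e : ℕ} (he : 1 ≤ e) (k : ℕ) :
    (p : R) ^ (e + 1) ∣ boxSum ι (p ^ (e + 1)) k - p ^ 2 * boxSum ι (p ^ e) k := by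
  have h := sq_dvd_boxSum_mul_sub ι p (p ^ e) k
  rw [← pow_succ'] at h
  push_cast at h
  have h₁ : (p : R) ^ (e + 1) ∣ ((p : R) ^ e) ^ 2 := by
    rw [← pow_mul]
    exact pow_dvd_pow _ (by omega)
  have h₂ : (p : R) ^ (e + 1) ∣ boxSum ι (p ^ e) (k - 1) * p ^ e * k * boxSum ι p 1 := by
    rw [pow_succ]
    exact mul_dvd_mul ((dvd_mul_left _ _).mul_right _) (natCast_dvd_boxSum_one ι p)
  simpa using (h₁.trans h).add h₂

theorem pow_dvd_boxSum_pow (p k : ℕ) {e : ℕ} (he : 2 ≤ e) :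
    (p : R) ^ e ∣ boxSum ι (p ^ e) k := by
  induction e, he using Nat.le_induction with
  | base =>
    exact (dvd_iff_dvd_of_dvd_sub (pow_succ_dvd_boxSum_pow_succ_sub ι p le_rfl k)).2
      (dvd_mul_right _ _)
  | succ e he ih =>
    refine (dvd_iff_dvd_of_dvd_sub (pow_succ_dvd_boxSum_pow_succ_sub ι p (by omega) k)).2 ?_
    rw [pow_succ']
    exact mul_dvd_mul (dvd_pow_self _ two_ne_zero) ih

end BoxSum

theorem two_dvd_boxSum_two {R : Type*} [CommRing R] {ι : R} (hι : ι * ι = -1) {m : ℕ}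
    (hm : m ≠ 0) : (2 : R) ∣ boxSum ι 2 (2 * m) := by
  have hsq : (1 + ι) ^ 2 = 2 * ι := by linear_combination hι
  have hsum : boxSum ι 2 (2 * m) = ((-1) ^ m + 1) + (2 * ι) ^ m := by
    simp [boxSum, sum_range_succ, pow_mul, zero_pow hm, sq ι, hι, hsq]
    ring
  rw [hsum]
  refine dvd_add ?_ (dvd_pow (dvd_mul_right 2 ι) hm)
  rcases m.even_or_odd with h | h <;> simp [h.neg_one_pow, one_add_one_eq_two]

theorem boxSum_zmod_self {p : ℕ} [NeZero p] (ι : ZMod p) (k : ℕ) : boxSum ι p k = 0 := by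
  have translate (b : ℕ) :
      ∑ a ∈ range p, ((a : ZMod p) + (b : ZMod p) * ι) ^ k = ∑ x : ZMod p, x ^ k :=
    (sum_range_natCast_zmod fun x => (x + (b : ZMod p) * ι) ^ k).trans
      (Fintype.sum_equiv (Equiv.addRight _) _ _ fun _ => rfl)
  rw [boxSum, sum_comm]
  simp [translate]

theorem boxSum_eq_sum_zmod {p : ℕ} [NeZero p] {L : Type*} [CommRing L] [Algebra (ZMod p) L]
    (ι : L) (k : ℕ) : boxSum ι p k =
      ∑ xy : ZMod p × ZMod p, (algebraMap _ L xy.1 + algebraMap _ L xy.2 * ι) ^ k := by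
  rw [Fintype.sum_prod_type, boxSum, ← sum_range_natCast_zmod]
  refine sum_congr rfl fun a _ => ?_
  rw [← sum_range_natCast_zmod]
  simp

namespace GaussianInt

open Zsqrtd

theorem Gsum_eq_sum_Icc (k n : ℕ) :
    Gsum k n =
      ∑ a ∈ Icc 1 n, ∑ b ∈ Icc 1 n, ((a : GaussianInt) + (b : GaussianInt) * sqrtd) ^ k := by
  refine sum_congr rfl fun a _ => sum_congr rfl fun b _ => ?_
  congr 1
  ext <;> simp

theorem natCast_dvd_Gsum_iff (k n : ℕ) :
    (n : GaussianInt) ∣ Gsum k n ↔ (n : GaussianInt) ∣ boxSum sqrtd n k := by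
  have hn : (n : GaussianInt ⧸ Ideal.span {(n : GaussianInt)}) = 0 := by
    rw [← map_natCast (Ideal.Quotient.mk _), Ideal.Quotient.eq_zero_iff_dvd]
  simp only [← Ideal.Quotient.eq_zero_iff_dvd, Gsum_eq_sum_Icc, map_boxSum, map_sum, map_pow,
    map_add, map_mul, map_natCast, sum_Icc_Icc_eq_boxSum _ hn]

theorem natCast_dvd_iff {p : ℕ} {z : GaussianInt} :
    (p : GaussianInt) ∣ z ↔ (z.re : ZMod p) = 0 ∧ (z.im : ZMod p) = 0 := by
  rw [← Int.cast_natCast, intCast_dvd, ZMod.intCast_zmod_eq_zero_iff_dvd,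
    ZMod.intCast_zmod_eq_zero_iff_dvd]

theorem natCast_dvd_boxSum_of_isSquare_neg_one {p : ℕ} [Fact p.Prime] (hp : p ≠ 2)
    (h : IsSquare (-1 : ZMod p)) (k : ℕ) : (p : GaussianInt) ∣ boxSum sqrtd p k := by
  obtain ⟨c, hc⟩ := h
  set z := boxSum (sqrtd : GaussianInt) p k
  have key (d : ZMod p) (hd : d * d = -1) : (z.re : ZMod p) + z.im * d = 0 := by
    simpa [z, boxSum_zmod_self] using map_boxSum sqrtd (lift ⟨d, by simpa using hd⟩) p k
  have h₁ := key c hc.symm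
  have h₂ := key (-c) (by rw [neg_mul_neg, hc])
  have h2 : (2 : ZMod p) ≠ 0 := Ring.two_ne_zero (by rwa [ZMod.ringChar_zmod_n])
  have hc0 : c ≠ 0 := by rintro rfl; simp at hc
  rw [natCast_dvd_iff]
  constructor
  · have : 2 * (z.re : ZMod p) = 0 := by linear_combination h₁ + h₂
    simpa [h2] using this
  · have : 2 * c * (z.im : ZMod p) = 0 := by linear_combination h₁ - h₂
    simpa [h2, hc0] using this

theorem natCast_dvd_boxSum_iff_of_mod_four_eq_three {p : ℕ} [Fact p.Prime] (hp : p % 4 = 3)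
    {k : ℕ} (hk : k ≠ 0) : (p : GaussianInt) ∣ boxSum sqrtd p k ↔ ¬ p ^ 2 - 1 ∣ k := by
  let F := GaloisField p 2
  let _ : Fintype F := Fintype.ofFinite F
  have hcard : Fintype.card F = p ^ 2 := by
    rw [← Nat.card_eq_fintype_card]
    exact GaloisField.card p 2 two_ne_zero
  have hK : ¬ IsSquare (-1 : ZMod p) := by simp [ZMod.exists_sq_eq_neg_one_iff, hp]
  obtain ⟨c, hc⟩ : IsSquare (-1 : F) := by
    rw [FiniteField.isSquare_neg_one_iff, hcard, Nat.pow_mod, hp]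
    decide
  let φ : GaussianInt →+* F := lift ⟨c, by simpa using hc.symm⟩
  have hdet : (p : GaussianInt) ∣ boxSum sqrtd p k ↔ φ (boxSum sqrtd p k) = 0 := by
    refine ⟨fun ⟨w, hw⟩ => by simp [hw], fun h => natCast_dvd_iff.2 ?_⟩
    refine eq_zero_of_algebraMap_add_algebraMap_mul_eq_zero hK hc.symm ?_
    simpa [φ] using h
  have hbij := bijective_algebraMap_add_algebraMap_mul hK hc.symm (by rw [hcard, ZMod.card])
  rw [hdet, map_boxSum, show φ sqrtd = c by simp [φ], boxSum_eq_sum_zmod,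
    Fintype.sum_bijective _ hbij _ (· ^ k) fun _ => rfl, FiniteField.sum_pow_eq_zero_iff hk,
    hcard]

theorem natCast_dvd_boxSum_self_iff {p n : ℕ} (hp : p.Prime) (hn : n ≠ 0) (hpn : p ∣ n) :
    (p : GaussianInt) ∣ boxSum sqrtd p n ↔ ¬ (p % 4 = 3 ∧ p ^ 2 - 1 ∣ n) := by
  have := Fact.mk hp
  rcases hp.eq_two_or_odd with rfl | hodd
  · obtain ⟨m, rfl⟩ := hpn
    have hι : (sqrtd : GaussianInt) * sqrtd = -1 := by simp [dmuld]
    simpa using two_dvd_boxSum_two hι (right_ne_zero_of_mul hn)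
  by_cases h3 : p % 4 = 3
  · simp [h3, natCast_dvd_boxSum_iff_of_mod_four_eq_three h3 hn]
  · simp only [h3, false_and, not_false_eq_true, iff_true]
    exact natCast_dvd_boxSum_of_isSquare_neg_one (by omega)
      (ZMod.exists_sq_eq_neg_one_iff.2 h3) n

theorem ordProj_dvd_boxSum_iff {n p : ℕ} (hn : n ≠ 0) (hp : p.Prime) (hpn : p ∣ n) :
    ((p ^ n.factorization p : ℕ) : GaussianInt) ∣ boxSum sqrtd n n ↔
      ¬ (p % 4 = 3 ∧ p ^ 3 - p ∣ n ∧ ¬ p ^ 2 ∣ n) := by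
  have hcop := (Nat.coprime_ordCompl hp hn).pow_left (n.factorization p)
  have hreduce := dvd_boxSum_mul_iff (sqrtd : GaussianInt) hcop n
  rw [Nat.div_mul_cancel (Nat.ordProj_dvd n p)] at hreduce
  rw [hreduce, hp.pow_three_sub_dvd_iff hpn, hp.pow_dvd_iff_le_factorization hn]
  have he := hp.factorization_pos_of_dvd hn hpn
  obtain he | he : 1 = n.factorization p ∨ 1 < n.factorization p := by omega
  · rw [← he, pow_one, natCast_dvd_boxSum_self_iff hp hn hpn]
    tauto
  · refine iff_of_true ?_ fun h => h.2.2 he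
    rw [Nat.cast_pow]
    exact pow_dvd_boxSum_pow _ _ _ he

end GaussianInt

theorem Gsum_diag_not_zero_mod_iff (n : ℕ) (hn : 1 < n) :
    ¬ (n : GaussianInt) ∣ Gsum n n ↔
      ∃ p : ℕ, p.Prime ∧ p % 4 = 3 ∧ (p ^ 3 - p) ∣ n ∧ ¬ p ^ 2 ∣ n := by
  have hn0 : n ≠ 0 := by omega
  rw [GaussianInt.natCast_dvd_Gsum_iff, natCast_dvd_iff_forall_ordProj_dvd hn0]
  push Not
  constructor
  · rintro ⟨p, hp, hbad⟩
    have hp' := Nat.prime_of_mem_primeFactors hp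
    exact ⟨p, hp', not_not.1 <|
      (GaussianInt.ordProj_dvd_boxSum_iff hn0 hp' (Nat.dvd_of_mem_primeFactors hp)).not.1 hbad⟩
  · rintro ⟨p, hp, hbad⟩
    have hpn : p ∣ n := (Nat.dvd_sub (dvd_pow_self p three_ne_zero) dvd_rfl).trans hbad.2.1
    exact ⟨p, Nat.mem_primeFactors.2 ⟨hp, hpn, hn0⟩,
      fun h => (GaussianInt.ordProj_dvd_boxSum_iff hn0 hp hpn).1 h hbad⟩
end
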